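/- Let S be a *-semigroup, A a unital C*-algebra, and ω : S → A an A-positive definite function. Suppose ω has an approximate unit: there exist a nonempty directed preordered type ι and nets u : ι → S, a : ι → A such that for every s ∈ S, (a λ)⋆ * ω((u λ) * s) converges to ω(s) along the atTop filter on ι, ω(s * (u λ)⋆) * (a λ) converges to ω(s) along atTop, and there is M ≥ 0 with ‖(a λ)⋆ * ω((u λ) * (u λ)⋆) * (a λ)‖ ≤ M for all λ ∈ ι. Then ω has the extension property: ω(s⋆) = ω(s)⋆ for all s ∈ S, and there is a constant c > 0 such that c • ∑_{i,j} (a i)⋆ * ω(s i)⋆ * ω(s j) * (a j) ≤ ∑_{i,j} (a i)⋆ * ω((s i)⋆ * (s j)) * (a j) for all finite families s : Fin n → S, a : Fin n → A. -/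

import Mathlib

/-!
Testing positive definiteness on the pair `(p⋆, q)` with coefficients `(1, z)` for all `z : ℂ`
forces `ω (p * q)⋆ = ω (q⋆ * p⋆)`; with the approximate unit this gives `ω (s⋆) = ω (s)⋆`.
For the inequality, adjoin `(u λ)⋆` with coefficient `a λ * c` to a family `(s, a)`. Positive
definiteness of the enlarged family is a quadratic inequality in `c`; completing the square with
the bound `M` on `‖(a λ)⋆ ω (u λ (u λ)⋆) (a λ)‖` gives `M⁻¹ • X⋆ X ≤ ∑ a_i⋆ ω (s_i⋆ s_j) a_j` for
`X = ∑ (a λ)⋆ ω (u λ * s_j) a_j`, and `X` tends to `∑ ω (s_j) a_j` along the net.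
-/

open Filter Topology

theorem star_eq_of_forall_isSelfAdjoint_smul_add_smul {A : Type*} [AddCommGroup A]
    [StarAddMonoid A] [Module ℂ A] [StarModule ℂ A] {P Q : A}
    (h : ∀ z : ℂ, IsSelfAdjoint (z • P + star z • Q)) : star P = Q := by
  have h1 : star P + star Q = P + Q := by simpa using (h 1).star_eq
  have hI : -(Complex.I • star P) + Complex.I • star Q = Complex.I • P + -(Complex.I • Q) := by
    simpa [Complex.conj_I] using (h Complex.I).star_eq
  have h2 : star Q - star P = P - Q := by
    apply smul_right_injective A Complex.I_ne_zero
    linear_combination (norm := module) hI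
  linear_combination (norm := module) (1 / 2 : ℂ) • (h1 - h2)

theorem CStarAlgebra.inv_smul_star_mul_self_le {A : Type*} [NonUnitalCStarAlgebra A]
    [PartialOrder A] [StarOrderedRing A] {P X B : A} {M : ℝ} (hP : IsSelfAdjoint P) (hPM : ‖P‖ ≤ M) (hM : 0 < M)
    (h : ∀ c, 0 ≤ star c * P * c + star c * X + star X * c + B) :
    M⁻¹ • (star X * X) ≤ B := by
  have hconj : star X * P * X ≤ M • (star X * X) :=
    (CStarAlgebra.star_left_conjugate_le_norm_smul hP).trans
      (smul_le_smul_of_nonneg_right hPM (star_mul_self_nonneg X))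
  -- complete the square at `c = -M⁻¹ • X`
  have hc : 0 ≤ (M⁻¹ ^ 2) • (star X * P * X) - (2 * M⁻¹) • (star X * X) + B := by
    convert h (-(M⁻¹ • X)) using 1
    simp only [star_neg, star_smul, star_trivial, neg_mul, mul_neg, smul_mul_assoc, mul_smul_comm]
    module
  calc M⁻¹ • (star X * X) = (2 * M⁻¹) • (star X * X) - (M⁻¹ ^ 2) • (M • (star X * X)) := by
        rw [smul_smul, ← sub_smul]; congr 1; field_simp; ring
    _ ≤ (2 * M⁻¹) • (star X * X) - (M⁻¹ ^ 2) • (star X * P * X) := by gcongr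
    _ ≤ B := by rw [← sub_nonneg]; convert hc using 1; abel

def IsPositiveDefinite {S A : Type*} [Mul S] [Star S] [NonUnitalSemiring A] [StarRing A]
    [PartialOrder A] (ω : S → A) : Prop :=
  ∀ (n : ℕ) (s : Fin n → S) (a : Fin n → A),
    0 ≤ ∑ i, ∑ j, star (a i) * ω (star (s i) * s j) * a j

namespace IsPositiveDefinite

theorem conj_apply_mul_star_nonneg {S A : Type*} [Mul S] [InvolutiveStar S] [NonUnitalSemiring A]
    [StarRing A] [PartialOrder A] {ω : S → A} (hω : IsPositiveDefinite ω) (v : S) (e : A) :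
    0 ≤ star e * ω (v * star v) * e := by
  simpa using hω 1 ![star v] ![e]

variable {S : Type*} [Mul S] [InvolutiveStar S]
  {A : Type*} [CStarAlgebra A] [PartialOrder A] [StarOrderedRing A] {ω : S → A}

theorem star_apply_mul (hω : IsPositiveDefinite ω) (p q : S) :
    star (ω (p * q)) = ω (star q * star p) := by
  refine star_eq_of_forall_isSelfAdjoint_smul_add_smul fun z => ?_
  have hpq := IsSelfAdjoint.of_nonneg (hω 2 ![star p, q] ![1, z • 1])
  have hp := IsSelfAdjoint.of_nonneg (by simpa using hω.conj_apply_mul_star_nonneg p 1)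
  have hq := IsSelfAdjoint.of_nonneg (by simpa using hω.conj_apply_mul_star_nonneg (star q) 1)
  convert (hpq.sub hp).sub (hq.conjugate' (z • 1)) using 1
  simp only [Fin.sum_univ_two, Matrix.cons_val_zero, Matrix.cons_val_one, Matrix.cons_val_fin_one,
    star_one, star_star, one_mul, mul_one, star_smul, RCLike.star_def, Algebra.mul_smul_comm,
    Algebra.smul_mul_assoc]
  abel

theorem nonneg_cons (hω : IsPositiveDefinite ω) (v : S) (e c : A) {n : ℕ} (s : Fin n → S)
    (a : Fin n → A) :
    let X := ∑ j, star e * ω (v * s j) * a j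
    0 ≤ star c * (star e * ω (v * star v) * e) * c + star c * X + star X * c +
      ∑ i, ∑ j, star (a i) * ω (star (s i) * s j) * a j := by
  intro X
  have hX : star X = ∑ i, star (a i) * ω (star (s i) * star v) * e := by
    simp only [X, star_sum, star_mul, star_star, hω.star_apply_mul, mul_assoc]
  have h := hω (n + 1) (Fin.cons (star v) s) (Fin.cons (e * c) a)
  simp only [Fin.sum_univ_succ, Fin.cons_zero, Fin.cons_succ, star_star] at h
  rw [hX]
  convert h using 1
  simp only [X, star_mul, Finset.sum_add_distrib, Finset.mul_sum, Finset.sum_mul, mul_assoc]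
  abel

theorem apply_star_of_tendsto (hω : IsPositiveDefinite ω) {ι : Type*} {l : Filter ι} [l.NeBot]
    {u : ι → S} {e : ι → A} {s : S}
    (hleft : Tendsto (fun i => star (e i) * ω (u i * star s)) l (𝓝 (ω (star s))))
    (hright : Tendsto (fun i => ω (s * star (u i)) * e i) l (𝓝 (ω s))) :
    ω (star s) = star (ω s) := by
  refine tendsto_nhds_unique hleft (hright.star.congr fun i => ?_)
  rw [star_mul, hω.star_apply_mul, star_star]

theorem inv_smul_sum_le_of_tendsto (hω : IsPositiveDefinite ω) {ι : Type*} {l : Filter ι}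
    [l.NeBot] {u : ι → S} {e : ι → A} {M : ℝ} (hM : 0 < M)
    (hbound : ∀ i, ‖star (e i) * ω (u i * star (u i)) * e i‖ ≤ M)
    (hleft : ∀ s, Tendsto (fun i => star (e i) * ω (u i * s)) l (𝓝 (ω s)))
    {n : ℕ} (s : Fin n → S) (a : Fin n → A) :
    M⁻¹ • ∑ i, ∑ j, star (a i) * star (ω (s i)) * ω (s j) * a j ≤
      ∑ i, ∑ j, star (a i) * ω (star (s i) * s j) * a j := by
  have hX : Tendsto (fun i => ∑ j, star (e i) * ω (u i * s j) * a j) l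
      (𝓝 (∑ j, ω (s j) * a j)) :=
    tendsto_finsetSum _ fun j _ => (hleft (s j)).mul_const (a j)
  have hT : star (∑ j, ω (s j) * a j) * ∑ j, ω (s j) * a j =
      ∑ i, ∑ j, star (a i) * star (ω (s i)) * ω (s j) * a j := by
    simp only [star_sum, Finset.sum_mul_sum, star_mul, mul_assoc]
  refine le_of_tendsto (hT ▸ (hX.star.mul hX).const_smul M⁻¹) (Eventually.of_forall fun i => ?_)
  exact CStarAlgebra.inv_smul_star_mul_self_le
    (.of_nonneg (hω.conj_apply_mul_star_nonneg (u i) (e i))) (hbound i) hM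
    (fun c => hω.nonneg_cons (u i) (e i) c s a)

end IsPositiveDefinite

/-- If an `A`-positive definite function `ω` on a *-semigroup `S` (with `A` a
unital C*-algebra) has an approximate unit, then `ω` has the extension property. -/
theorem approximate_unit_implies_extension_property
    {S : Type*} [Semigroup S] [StarMul S]
    {A : Type*} [CStarAlgebra A] [PartialOrder A] [StarOrderedRing A]
    (ω : S → A)
    (hpd : ∀ (n : ℕ) (s : Fin n → S) (a : Fin n → A),
      0 ≤ ∑ i, ∑ j, star (a i) * ω (star (s i) * s j) * a j)
    (happrox : ∃ (ι : Type) (_ : Preorder ι) (_ : Nonempty ι) (_ : IsDirected ι (· ≤ ·))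
      (u : ι → S) (a : ι → A),
      (∀ s : S, Tendsto (fun l => star (a l) * ω (u l * s)) atTop (𝓝 (ω s))) ∧
      (∀ s : S, Tendsto (fun l => ω (s * star (u l)) * a l) atTop (𝓝 (ω s))) ∧
      (∃ M : ℝ, 0 ≤ M ∧ ∀ l : ι, ‖star (a l) * ω (u l * star (u l)) * a l‖ ≤ M)) :
    (∀ s : S, ω (star s) = star (ω s)) ∧
      ∃ c : ℝ, 0 < c ∧ ∀ (n : ℕ) (s : Fin n → S) (a : Fin n → A),
        c • ∑ i, ∑ j, star (a i) * star (ω (s i)) * ω (s j) * a j ≤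
          ∑ i, ∑ j, star (a i) * ω (star (s i) * s j) * a j := by
  obtain ⟨ι, _, _, _, u, e, hleft, hright, M, hM, hbound⟩ := happrox
  have hω : IsPositiveDefinite ω := hpd
  exact ⟨fun s => hω.apply_star_of_tendsto (l := atTop) (hleft (star s)) (hright s),
    (M + 1)⁻¹, by positivity, fun n s a => hω.inv_smul_sum_le_of_tendsto (by positivity)
      (fun i => (hbound i).trans (by linarith)) hleft s a⟩
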